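/- Let X be a topological space. If for every continuous map χ : X → V there exists a continuous map λ : X → I₀¹ with π ∘ λ = χ, then X is a normal space. -/

import Mathlib

open unitInterval

/-- The interval with doubled endpoints: `[0,1]` together with extra points
`0' = Sum.inr false` and `1' = Sum.inr true`, with `0 ⤳ 0'` and `1 ⤳ 1'`. -/
def I01 : Type := unitInterval ⊕ Bool

instance : TopologicalSpace I01 where
  IsOpen U := IsOpen (Sum.inl ⁻¹' U : Set unitInterval) ∧
    (Sum.inr false ∈ U → Sum.inl (0 : unitInterval) ∈ U) ∧
    (Sum.inr true ∈ U → Sum.inl (1 : unitInterval) ∈ U)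
  isOpen_univ := ⟨isOpen_univ, fun _ => trivial, fun _ => trivial⟩
  isOpen_inter U V hU hV := ⟨hU.1.inter hV.1,
    fun h => ⟨hU.2.1 h.1, hV.2.1 h.2⟩, fun h => ⟨hU.2.2 h.1, hV.2.2 h.2⟩⟩
  isOpen_sUnion S hS := by
    refine ⟨?_, ?_, ?_⟩
    · have e : (Sum.inl ⁻¹' ⋃₀ S : Set unitInterval) = ⋃ U ∈ S, (Sum.inl ⁻¹' U : Set unitInterval) :=
        Set.preimage_sUnion
      have h2 : IsOpen (⋃ U ∈ S, (Sum.inl ⁻¹' U : Set unitInterval)) :=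
        isOpen_biUnion fun U hU => (hS U hU).1
      rw [← e] at h2
      exact h2
    · rintro ⟨U, hU, hmem⟩
      exact ⟨U, hU, (hS U hU).2.1 hmem⟩
    · rintro ⟨U, hU, hmem⟩
      exact ⟨U, hU, (hS U hU).2.2 hmem⟩

/-- The three-point space with an open point `c` and two closed points `L`, `R`. -/
inductive V : Type
  | L | c | R

instance : TopologicalSpace V where
  IsOpen U := (V.L ∈ U → V.c ∈ U) ∧ (V.R ∈ U → V.c ∈ U)
  isOpen_univ := ⟨fun _ => trivial, fun _ => trivial⟩
  isOpen_inter U W hU hW := ⟨fun h => ⟨hU.1 h.1, hW.1 h.2⟩, fun h => ⟨hU.2 h.1, hW.2 h.2⟩⟩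
  isOpen_sUnion S hS := by
    constructor
    · rintro ⟨U, hU, hmem⟩
      exact ⟨U, hU, (hS U hU).1 hmem⟩
    · rintro ⟨U, hU, hmem⟩
      exact ⟨U, hU, (hS U hU).2 hmem⟩

/-- The map `π : I₀¹ → V` collapsing `[0,1]` to the open point `c`. -/
def pi1 : I01 → V
  | Sum.inl _ => V.c
  | Sum.inr false => V.L
  | Sum.inr true => V.R

/-- The map `ι : I₀¹ → [0,1]` collapsing the doubled endpoints. -/
def iota : I01 → unitInterval
  | Sum.inl x => x
  | Sum.inr false => 0
  | Sum.inr true => 1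


/-!
Given disjoint closed sets `A` and `B`, the map `χ : X → V` sending `A` to `L`, `B` to `R` and
everything else to `c` is continuous. For a lift `λ` of `χ`, the composite `ι ∘ λ : X → [0,1]`
is continuous, `0` on `A` and `1` on `B`, so preimages of disjoint neighbourhoods of `0` and
`1` separate `A` and `B`.
-/

theorem continuous_iota : Continuous iota :=
  continuous_def.2 fun _ hU => ⟨hU, id, id⟩

theorem preimage_pi1_L_subset : pi1 ⁻¹' {V.L} ⊆ iota ⁻¹' {0}
  | Sum.inl _, h => nomatch h
  | Sum.inr false, _ => rfl
  | Sum.inr true, h => nomatch h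

theorem preimage_pi1_R_subset : pi1 ⁻¹' {V.R} ⊆ iota ⁻¹' {1}
  | Sum.inl _, h => nomatch h
  | Sum.inr false, h => nomatch h
  | Sum.inr true, _ => rfl

theorem V.continuous_of_isClosed_preimage {X : Type*} [TopologicalSpace X] {χ : X → V}
    (hL : IsClosed (χ ⁻¹' {V.L})) (hR : IsClosed (χ ⁻¹' {V.R})) : Continuous χ := by
  -- the smallest open neighbourhoods of `L`, `c`, `R` are `{L, c}`, `{c}`, `{c, R}`
  refine continuous_def.2 fun U hU => isOpen_iff_forall_mem_open.2 fun x hx => ?_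
  rcases hχx : χ x with _ | _ | _
  · refine ⟨(χ ⁻¹' {V.R})ᶜ, fun y hy => ?_, hR.isOpen_compl, by simp [hχx]⟩
    rcases hχy : χ y with _ | _ | _ <;> simp_all [hU.1]
  · refine ⟨(χ ⁻¹' {V.L} ∪ χ ⁻¹' {V.R})ᶜ, fun y hy => ?_, (hL.union hR).isOpen_compl,
      by simp [hχx]⟩
    rcases hχy : χ y with _ | _ | _ <;> simp_all
  · refine ⟨(χ ⁻¹' {V.L})ᶜ, fun y hy => ?_, hL.isOpen_compl, by simp [hχx]⟩
    rcases hχy : χ y with _ | _ | _ <;> simp_all [hU.2]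

theorem V.exists_continuous_preimage_eq {X : Type*} [TopologicalSpace X] {A B : Set X}
    (hA : IsClosed A) (hB : IsClosed B) (hAB : Disjoint A B) :
    ∃ χ : X → V, Continuous χ ∧ χ ⁻¹' {V.L} = A ∧ χ ⁻¹' {V.R} = B := by
  classical
  let χ : X → V := fun x => if x ∈ A then V.L else if x ∈ B then V.R else V.c
  have hχA : χ ⁻¹' {V.L} = A := by
    ext x; by_cases hxA : x ∈ A <;> by_cases hxB : x ∈ B <;> simp_all [χ]
  have hχB : χ ⁻¹' {V.R} = B := by
    ext x; by_cases hxA : x ∈ A <;> by_cases hxB : x ∈ B <;> simp_all [χ]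
    exact hAB.notMem_of_mem_left hxA hxB
  exact ⟨χ, V.continuous_of_isClosed_preimage (hχA ▸ hA) (hχB ▸ hB), hχA, hχB⟩

theorem separatedNhds_zero_one : SeparatedNhds ({0} : Set I) {1} :=
  .of_isCompact_isCompact isCompact_singleton isCompact_singleton
    (Set.disjoint_singleton.2 zero_ne_one)

/-- if every continuous `χ : X → V` lifts through `π : I₀¹ → V`, then `X`
is a normal space. -/
theorem normal_of_lifts (X : Type) [TopologicalSpace X]
    (h : ∀ χ : X → V, Continuous χ →
      ∃ lam : X → I01, Continuous lam ∧ pi1 ∘ lam = χ) :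
    NormalSpace X := by
  refine ⟨fun A B hA hB hAB => ?_⟩
  obtain ⟨χ, hχ, hχA, hχB⟩ := V.exists_continuous_preimage_eq hA hB hAB
  obtain ⟨lam, hlam, rfl⟩ := h χ hχ
  refine (separatedNhds_zero_one.preimage (continuous_iota.comp hlam)).mono ?_ ?_
  · rw [← hχA]
    exact Set.preimage_mono preimage_pi1_L_subset
  · rw [← hχB]
    exact Set.preimage_mono preimage_pi1_R_subset
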